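/- Consider f and h as in (P₁) and the equality-constrained problem (EP): minimize f(x,u,w) subject to h(x,u,w) = 0. Suppose: (i) there exist points v₋ and v₊ with h(v₋) < 0 and h(v₊) > 0; and (ii) k ≥ 1 or αᵢ ≠ 0 for some i. Then the infimum of (EP) equals the infimum of the problem (EP₁): minimize Σᵢ(δᵢyᵢ + eᵢxᵢ) + Σⱼ ζⱼzⱼ + c₀ over x, y ∈ ℝ^l, z ∈ ℝ^k subject to Σᵢ(αᵢyᵢ + bᵢxᵢ) + Σⱼ zⱼ + c = 0 and ½xᵢ² ≤ yᵢ for all i (as extended real numbers). Moreover, if (EP₁) attains its infimum, then it attains it at a point with ½x̄ᵢ² = ȳᵢ for all i; and if ζᵢ ≠ ζⱼ for some i ≠ j, then (EP) is unbounded from below. -/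

import Mathlib

open scoped Classical

/-- The objective `f(x,u,w) = Σᵢ(½δᵢxᵢ² + eᵢxᵢ) + Σⱼ(ζⱼuⱼwⱼ + ½wⱼ² + ηⱼwⱼ)` of problem (P₁). -/
noncomputable def quadObj {l k : ℕ} (δ e : Fin l → ℝ) (ζ η : Fin k → ℝ)
    (x : Fin l → ℝ) (u w : Fin k → ℝ) : ℝ :=
  (∑ i, ((1/2) * δ i * x i ^ 2 + e i * x i)) +
    ∑ j, (ζ j * u j * w j + (1/2) * w j ^ 2 + η j * w j)

/-- The constraint function `h(x,u,w) = Σᵢ(½αᵢxᵢ² + bᵢxᵢ) + Σⱼ uⱼwⱼ + c` of problem (P₁). -/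
noncomputable def quadCon {l k : ℕ} (α b : Fin l → ℝ) (c : ℝ)
    (x : Fin l → ℝ) (u w : Fin k → ℝ) : ℝ :=
  (∑ i, ((1/2) * α i * x i ^ 2 + b i * x i)) + (∑ j, u j * w j) + c

/-- The SOCP objective `Σᵢ(δᵢyᵢ + eᵢxᵢ) + Σⱼ ζⱼzⱼ + c₀` of problem (P₂). -/
noncomputable def socpObj {l k : ℕ} (δ e : Fin l → ℝ) (ζ : Fin k → ℝ) (c₀ : ℝ)
    (x y : Fin l → ℝ) (z : Fin k → ℝ) : ℝ :=
  (∑ i, (δ i * y i + e i * x i)) + (∑ j, ζ j * z j) + c₀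

/-- The linear part `Σᵢ(αᵢyᵢ + bᵢxᵢ) + Σⱼ zⱼ` of the SOCP constraint in (P₂). -/
noncomputable def socpConLhs {l k : ℕ} (α b : Fin l → ℝ)
    (x y : Fin l → ℝ) (z : Fin k → ℝ) : ℝ :=
  (∑ i, (α i * y i + b i * x i)) + ∑ j, z j

/-- The optimal value (in the extended reals) of the equality-constrained SOCP problem (EP₁). -/
noncomputable def socpValEq {l k : ℕ} (δ e α b : Fin l → ℝ) (ζ : Fin k → ℝ) (c c₀ : ℝ) : EReal :=
  sInf {v : EReal | ∃ (x y : Fin l → ℝ) (z : Fin k → ℝ),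
    socpConLhs α b x y z + c = 0 ∧ (∀ i, (1/2) * x i ^ 2 ≤ y i) ∧
    v = (socpObj δ e ζ c₀ x y z : EReal)}

/-!
Substituting `yᵢ = ½xᵢ²`, `zⱼ = uⱼwⱼ` and using `½wⱼ² + ηⱼwⱼ ≥ -½ηⱼ²` maps (EP) into (EP₁)
without increasing the objective. Conversely a relaxed point is pulled back coordinatewise:
`zⱼ = uⱼwⱼ` with `wⱼ ≠ 0` arbitrarily close to `-ηⱼ`, and for `αᵢ ≠ 0` one of the two roots `t` of
`½αᵢt² + bᵢt = αᵢyᵢ + bᵢxᵢ` does not increase the objective, since on this level set the objective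
is affine in `t` and the roots lie on both sides of `xᵢ`. This fails only at coordinates with
`αᵢ = 0 > δᵢ`, and then both problems are unbounded: starting from a feasible point of (EP)
(two-sided Slater condition and the intermediate value theorem), let `xᵢ → ±∞` and absorb the
linear change of the constraint in some `zⱼ` (`k ≥ 1`) or in some `yᵢ₀` with `αᵢ₀ ≠ 0`; the relaxed
objective is then a concave quadratic in `xᵢ`. An attained optimum is finite, so no such coordinate
exists, and pulling the minimizer back gives one with `½xᵢ² = yᵢ`. If `ζᵢ ≠ ζⱼ`, then with `x = 0`,
`w ≡ 1` and `u` on the line `uᵢ + uⱼ = -c` the objective of (EP) is affine in `uᵢ` with slope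
`ζᵢ - ζⱼ`.
-/

theorem exists_root_mul_nonpos {a β g : ℝ} (ha : a ≠ 0) (hg : 0 ≤ g) (κ : ℝ) :
    ∃ d, 1/2 * a * d ^ 2 + β * d = a * g ∧ κ * d ≤ 0 := by
  set s := √(β ^ 2 + 2 * a ^ 2 * g)
  have hs : s ^ 2 = β ^ 2 + 2 * a ^ 2 * g := Real.sq_sqrt (by positivity)
  have hroot₁ : 1/2 * a * ((-β + s) / a) ^ 2 + β * ((-β + s) / a) = a * g := by
    field_simp
    linear_combination hs
  have hroot₂ : 1/2 * a * ((-β - s) / a) ^ 2 + β * ((-β - s) / a) = a * g := by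
    field_simp
    linear_combination hs
  -- the two roots have product `-2 g ≤ 0`, so `κ d ≤ 0` holds at one of them
  have hprod : (κ * ((-β + s) / a)) * (κ * ((-β - s) / a)) = -2 * g * κ ^ 2 := by
    field_simp
    linear_combination -κ ^ 2 * hs
  rcases le_or_gt (κ * ((-β - s) / a)) 0 with h | h
  · exact ⟨_, hroot₂, h⟩
  · refine ⟨_, hroot₁, ?_⟩
    by_contra! h'
    nlinarith [mul_pos h' h, sq_nonneg κ]

theorem exists_eq_and_le_of_half_sq_le {a δ b e x y : ℝ} (hy : 1/2 * x ^ 2 ≤ y)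
    (ha : a = 0 → δ * (1/2 * x ^ 2) ≤ δ * y) :
    ∃ t, 1/2 * a * t ^ 2 + b * t = a * y + b * x ∧ 1/2 * δ * t ^ 2 + e * t ≤ δ * y + e * x := by
  by_cases h : a = 0
  · exact ⟨x, by rw [h]; ring, by nlinarith [ha h]⟩
  -- with `t = x + d`, on the level set of the constraint the objective is affine in `d`
  obtain ⟨d, hd, hκ⟩ := exists_root_mul_nonpos (β := a * x + b) h (sub_nonneg.2 hy)
    (δ * x + e - δ * (a * x + b) / a)
  refine ⟨x + d, by linear_combination hd, ?_⟩
  have hobj : 1/2 * δ * (x + d) ^ 2 + e * (x + d) - (δ * y + e * x)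
      = (δ * x + e - δ * (a * x + b) / a) * d := by
    field_simp
    linear_combination 2 * δ * hd
  linarith

theorem exists_ne_zero_sq_add_lt (η : ℝ) {ε : ℝ} (hε : 0 < ε) : ∃ w ≠ 0, (w + η) ^ 2 < ε := by
  by_cases hη : η = 0
  · obtain ⟨w, hw₀, hw⟩ := exists_between (Real.sqrt_pos.2 hε)
    exact ⟨w, hw₀.ne', by simpa [hη] using (Real.lt_sqrt hw₀.le).1 hw⟩
  · exact ⟨-η, neg_ne_zero.2 hη, by simpa using hε⟩

theorem exists_nonneg_quadratic_lt {a : ℝ} (ha : a < 0) (b c M : ℝ) :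
    ∃ t, 0 ≤ t ∧ a * t ^ 2 + b * t + c < M := by
  set t := (|b| + |c - M|) / (-a) + 1
  have ht : -a * t = |b| + |c - M| - a := by
    rw [mul_add, mul_div_cancel₀ _ (neg_ne_zero.2 ha.ne)]
    ring
  have ht₁ : 1 ≤ t := le_add_of_nonneg_left (div_nonneg (by positivity) (by linarith))
  refine ⟨t, by linarith, ?_⟩
  nlinarith [le_abs_self b, le_abs_self (c - M), abs_nonneg (c - M)]

theorem exists_quadratic_lt {a : ℝ} (ha : a < 0) (s b c M : ℝ) :
    ∃ t, 0 ≤ s * t ∧ a * t ^ 2 + b * t + c < M := by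
  rcases le_total 0 s with hs | hs
  · obtain ⟨t, ht, h⟩ := exists_nonneg_quadratic_lt ha b c M
    exact ⟨t, mul_nonneg hs ht, h⟩
  · obtain ⟨t, ht, h⟩ := exists_nonneg_quadratic_lt ha (-b) c M
    exact ⟨-t, by nlinarith, by linarith [show a * (-t) ^ 2 + b * -t = a * t ^ 2 + -b * t by ring]⟩

section Identities

variable {l k : ℕ}

noncomputable def sepQuad (a b x : Fin l → ℝ) : ℝ := ∑ i, (1/2 * a i * x i ^ 2 + b i * x i)

theorem sepQuad_add_single (a b x : Fin l → ℝ) (i : Fin l) (t : ℝ) :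
    sepQuad a b (x + Pi.single i t) =
      sepQuad a b x + (a i * x i * t + 1/2 * a i * t ^ 2 + b i * t) := by
  rw [sepQuad, sepQuad, ← sub_eq_iff_eq_add', ← Finset.sum_sub_distrib,
    Fintype.sum_eq_single i fun j hj => by simp [hj]]
  simp only [Pi.add_apply, Pi.single_eq_same]
  ring

theorem socpConLhs_half_sq (α b x : Fin l → ℝ) (z : Fin k → ℝ) :
    socpConLhs α b x (fun i => 1/2 * x i ^ 2) z = sepQuad α b x + ∑ j, z j := by
  rw [socpConLhs, sepQuad]
  congr 1
  exact Finset.sum_congr rfl fun i _ => by ring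

theorem socpObj_half_sq (δ e x : Fin l → ℝ) (ζ z : Fin k → ℝ) (c₀ : ℝ) :
    socpObj δ e ζ c₀ x (fun i => 1/2 * x i ^ 2) z = sepQuad δ e x + ∑ j, ζ j * z j + c₀ := by
  rw [socpObj, sepQuad]
  congr 2
  exact Finset.sum_congr rfl fun i _ => by ring

theorem socpConLhs_add_add (α b x y Y : Fin l → ℝ) (z Z : Fin k → ℝ) :
    socpConLhs α b x (y + Y) (z + Z) =
      socpConLhs α b x y z + (∑ i, α i * Y i + ∑ j, Z j) := by
  simp only [socpConLhs, Pi.add_apply, mul_add, Finset.sum_add_distrib]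
  ring

theorem socpObj_add_add (δ e x y Y : Fin l → ℝ) (ζ z Z : Fin k → ℝ) (c₀ : ℝ) :
    socpObj δ e ζ c₀ x (y + Y) (z + Z) =
      socpObj δ e ζ c₀ x y z + (∑ i, δ i * Y i + ∑ j, ζ j * Z j) := by
  simp only [socpObj, Pi.add_apply, mul_add, Finset.sum_add_distrib]
  ring

theorem quadCon_eq_socpConLhs (α b x : Fin l → ℝ) (u w : Fin k → ℝ) (c : ℝ) :
    quadCon α b c x u w = socpConLhs α b x (fun i => 1/2 * x i ^ 2) (fun j => u j * w j) + c := by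
  rw [socpConLhs_half_sq]
  rfl

theorem quadObj_eq_socpObj_add {δ e x : Fin l → ℝ} {ζ η u w : Fin k → ℝ} {c₀ : ℝ}
    (hc₀ : c₀ = -(1/2) * ∑ j, η j ^ 2) :
    quadObj δ e ζ η x u w = socpObj δ e ζ c₀ x (fun i => 1/2 * x i ^ 2) (fun j => u j * w j) +
      1/2 * ∑ j, (w j + η j) ^ 2 := by
  rw [socpObj_half_sq, hc₀, quadObj, sepQuad, Finset.mul_sum, Finset.mul_sum]
  simp only [add_assoc, ← Finset.sum_add_distrib]
  congr 1
  exact Finset.sum_congr rfl fun j _ => by ring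

end Identities

noncomputable def quadValEq {l k : ℕ} (δ e α b : Fin l → ℝ) (ζ η : Fin k → ℝ) (c : ℝ) : EReal :=
  sInf {v : EReal | ∃ (x : Fin l → ℝ) (u w : Fin k → ℝ),
    quadCon α b c x u w = 0 ∧ v = (quadObj δ e ζ η x u w : EReal)}

section Relaxation

variable {l k : ℕ} {δ e α b : Fin l → ℝ} {ζ η : Fin k → ℝ} {c c₀ : ℝ}

theorem exists_mul_eq_and_sum_sq_lt (η z : Fin k → ℝ) {ε : ℝ} (hε : 0 < ε) :
    ∃ u w : Fin k → ℝ, (∀ j, u j * w j = z j) ∧ 1/2 * ∑ j, (w j + η j) ^ 2 < ε := by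
  have hε' : 0 < ε / (k + 1) := by positivity
  choose w hw₀ hw using fun j => exists_ne_zero_sq_add_lt (η j) hε'
  refine ⟨fun j => z j / w j, w, fun j => div_mul_cancel₀ _ (hw₀ j), ?_⟩
  have hsum : ∑ j, (w j + η j) ^ 2 ≤ k * (ε / (k + 1)) := by
    simpa using Finset.sum_le_sum fun j (_ : j ∈ Finset.univ) => (hw j).le
  have hk : k * (ε / (k + 1)) < 2 * ε := by
    rw [mul_div_assoc', div_lt_iff₀ (by positivity)]
    nlinarith
  linarith

theorem exists_socpConLhs_eq_and_socpObj_le {x y : Fin l → ℝ} (z : Fin k → ℝ)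
    (hy : ∀ i, 1/2 * x i ^ 2 ≤ y i) (hreal : ∀ i, α i = 0 → δ i * (1/2 * x i ^ 2) ≤ δ i * y i) :
    ∃ x' : Fin l → ℝ,
      socpConLhs α b x' (fun i => 1/2 * x' i ^ 2) z = socpConLhs α b x y z ∧
      socpObj δ e ζ c₀ x' (fun i => 1/2 * x' i ^ 2) z ≤ socpObj δ e ζ c₀ x y z := by
  choose x' hcon hobj using fun i =>
    exists_eq_and_le_of_half_sq_le (b := b i) (e := e i) (hy i) (hreal i)
  refine ⟨x', ?_, ?_⟩
  · rw [socpConLhs_half_sq, socpConLhs, sepQuad]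
    congr 1
    exact Finset.sum_congr rfl fun i _ => by linear_combination hcon i
  · rw [socpObj_half_sq, socpObj, sepQuad]
    linarith [Finset.sum_le_sum fun i (_ : i ∈ Finset.univ) => hobj i]

theorem socpValEq_le_quadValEq (hc₀ : c₀ = -(1/2) * ∑ j, η j ^ 2) :
    socpValEq δ e α b ζ c c₀ ≤ quadValEq δ e α b ζ η c := by
  refine le_sInf ?_
  rintro _ ⟨x, u, w, hcon, rfl⟩
  refine sInf_le_of_le ⟨x, _, _, (quadCon_eq_socpConLhs α b x u w c).symm.trans hcon,
    fun i => le_rfl, rfl⟩ ?_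
  rw [quadObj_eq_socpObj_add hc₀, EReal.coe_le_coe_iff, le_add_iff_nonneg_right]
  positivity

theorem quadValEq_le_socpObj (hc₀ : c₀ = -(1/2) * ∑ j, η j ^ 2) {x y : Fin l → ℝ}
    {z : Fin k → ℝ} (hcon : socpConLhs α b x y z + c = 0) (hy : ∀ i, 1/2 * x i ^ 2 ≤ y i)
    (hreal : ∀ i, α i = 0 → δ i * (1/2 * x i ^ 2) ≤ δ i * y i) :
    quadValEq δ e α b ζ η c ≤ socpObj δ e ζ c₀ x y z := by
  obtain ⟨x', hcon', hobj'⟩ := exists_socpConLhs_eq_and_socpObj_le (ζ := ζ) (c₀ := c₀) z hy hreal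
  refine EReal.le_of_forall_lt_iff_le.1 fun r hr => ?_
  obtain ⟨u, w, huw, hsmall⟩ :=
    exists_mul_eq_and_sum_sq_lt η z (sub_pos.2 (EReal.coe_lt_coe_iff.1 hr))
  have hz : (fun j => u j * w j) = z := funext huw
  refine sInf_le_of_le ⟨x', u, w, ?_, rfl⟩ (EReal.coe_le_coe_iff.2 ?_)
  · rw [quadCon_eq_socpConLhs, hz, hcon', hcon]
  · rw [quadObj_eq_socpObj_add hc₀, hz]
    exact ((add_lt_add_of_le_of_lt hobj' hsmall).trans_eq (by ring)).le

theorem quadValEq_le_socpValEq_of_nonneg (hc₀ : c₀ = -(1/2) * ∑ j, η j ^ 2)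
    (hδ : ∀ i, α i = 0 → 0 ≤ δ i) : quadValEq δ e α b ζ η c ≤ socpValEq δ e α b ζ c c₀ := by
  refine le_sInf ?_
  rintro _ ⟨x, y, z, hcon, hy, rfl⟩
  exact quadValEq_le_socpObj hc₀ hcon hy fun i hi => mul_le_mul_of_nonneg_left (hy i) (hδ i hi)

theorem exists_quadCon_eq_zero
    (hneg : ∃ (x : Fin l → ℝ) (u w : Fin k → ℝ), quadCon α b c x u w < 0)
    (hpos : ∃ (x : Fin l → ℝ) (u w : Fin k → ℝ), 0 < quadCon α b c x u w) :
    ∃ (x : Fin l → ℝ) (u w : Fin k → ℝ), quadCon α b c x u w = 0 := by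
  obtain ⟨x₁, u₁, w₁, h₁⟩ := hneg
  obtain ⟨x₂, u₂, w₂, h₂⟩ := hpos
  have hcont : Continuous fun p : (Fin l → ℝ) × (Fin k → ℝ) × (Fin k → ℝ) =>
      quadCon α b c p.1 p.2.1 p.2.2 := by
    unfold quadCon
    fun_prop
  obtain ⟨p, hp⟩ := intermediate_value_univ (x₁, u₁, w₁) (x₂, u₂, w₂) hcont ⟨h₁.le, h₂.le⟩
  exact ⟨p.1, p.2.1, p.2.2, hp⟩

theorem quadValEq_le_of_ray (hc₀ : c₀ = -(1/2) * ∑ j, η j ^ 2) {x₀ : Fin l → ℝ}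
    {z₀ : Fin k → ℝ} (h₀ : socpConLhs α b x₀ (fun i => 1/2 * x₀ i ^ 2) z₀ + c = 0)
    {i : Fin l} (hαi : α i = 0) (t : ℝ) {Y : Fin l → ℝ} {Z : Fin k → ℝ} (hY : 0 ≤ Y)
    (hYα : ∀ j, α j = 0 → Y j = 0) (hYZ : ∑ j, α j * Y j + ∑ j, Z j = -(b i * t)) :
    quadValEq δ e α b ζ η c ≤ (socpObj δ e ζ c₀ x₀ (fun i => 1/2 * x₀ i ^ 2) z₀ +
      (1/2 * δ i * t ^ 2 + (δ i * x₀ i + e i) * t) + (∑ j, δ j * Y j + ∑ j, ζ j * Z j) : ℝ) := by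
  set x := x₀ + Pi.single i t
  have hcon : socpConLhs α b x ((fun j => 1/2 * x j ^ 2) + Y) (z₀ + Z) + c = 0 := by
    rw [socpConLhs_add_add, hYZ, socpConLhs_half_sq, sepQuad_add_single, hαi]
    rw [socpConLhs_half_sq] at h₀
    linear_combination h₀
  refine (quadValEq_le_socpObj hc₀ hcon (fun j => le_add_of_nonneg_right (hY j))
    fun j hj => by simp [hYα j hj]).trans_eq ?_
  rw [socpObj_add_add, socpObj_half_sq, socpObj_half_sq, sepQuad_add_single]
  ring_nf

theorem quadValEq_eq_bot (hc₀ : c₀ = -(1/2) * ∑ j, η j ^ 2)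
    (hneg : ∃ (x : Fin l → ℝ) (u w : Fin k → ℝ), quadCon α b c x u w < 0)
    (hpos : ∃ (x : Fin l → ℝ) (u w : Fin k → ℝ), 0 < quadCon α b c x u w)
    (hAne : 1 ≤ k ∨ ∃ i, α i ≠ 0) {i : Fin l} (hαi : α i = 0) (hδi : δ i < 0) :
    quadValEq δ e α b ζ η c = ⊥ := by
  obtain ⟨x₀, u₀, w₀, h₀⟩ := exists_quadCon_eq_zero hneg hpos
  rw [quadCon_eq_socpConLhs] at h₀
  set V := socpObj δ e ζ c₀ x₀ (fun i => 1/2 * x₀ i ^ 2) fun j => u₀ j * w₀ j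
  have hδi' : 1/2 * δ i < 0 := by linarith
  refine (EReal.eq_bot_iff_forall_lt _).2 fun M => ?_
  rcases hAne with hk | ⟨i₀, hαi₀⟩
  · set j₀ : Fin k := ⟨0, hk⟩
    obtain ⟨t, -, ht⟩ := exists_quadratic_lt hδi' 0 (δ i * x₀ i + e i - ζ j₀ * b i) V M
    refine (quadValEq_le_of_ray hc₀ h₀ hαi t le_rfl (fun _ _ => rfl)
      (Z := Pi.single j₀ (-(b i * t))) (by simp)).trans_lt (EReal.coe_lt_coe_iff.2 ?_)
    simp only [Pi.zero_apply, mul_zero, Finset.sum_const_zero, zero_add]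
    rw [Fintype.sum_eq_single j₀ fun j hj => by simp [hj], Pi.single_eq_same]
    linear_combination ht
  · set s := -b i / α i₀
    obtain ⟨t, hst, ht⟩ := exists_quadratic_lt hδi' s (δ i * x₀ i + e i + δ i₀ * s) V M
    have hY : ∀ j, α j * (Pi.single i₀ (s * t) : Fin l → ℝ) j =
        (Pi.single i₀ (-(b i * t)) : Fin l → ℝ) j := by
      intro j
      rcases eq_or_ne j i₀ with rfl | hj
      · simp only [Pi.single_eq_same, s]
        field_simp
      · simp [hj]
    refine (quadValEq_le_of_ray hc₀ h₀ hαi t (Y := Pi.single i₀ (s * t)) (Z := 0)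
      (Pi.single_nonneg.2 hst) (fun j hj => Pi.single_eq_of_ne (by rintro rfl; exact hαi₀ hj) _)
      (by simp [Finset.sum_congr rfl fun j _ => hY j])).trans_lt (EReal.coe_lt_coe_iff.2 ?_)
    simp only [Pi.zero_apply, mul_zero, Finset.sum_const_zero, add_zero]
    rw [Fintype.sum_eq_single i₀ fun j hj => by simp [hj], Pi.single_eq_same]
    linear_combination ht

theorem exists_quadCon_eq_zero_quadObj_lt {i j : Fin k} (hζ : ζ i ≠ ζ j) (M : ℝ) :
    ∃ (x : Fin l → ℝ) (u w : Fin k → ℝ), quadCon α b c x u w = 0 ∧ quadObj δ e ζ η x u w < M := by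
  set C := -(ζ j * c) + ∑ m, (1/2 + η m)
  set p := (M - 1 - C) / (ζ i - ζ j)
  have hp : (ζ i - ζ j) * p = M - 1 - C := mul_div_cancel₀ _ (sub_ne_zero.2 hζ)
  set u : Fin k → ℝ := Pi.single i p - Pi.single j (p + c)
  have hsum : ∀ v : Fin k → ℝ, ∑ m, v m * u m = v i * p - v j * (p + c) := by
    intro v
    simp [u, mul_sub, Finset.sum_sub_distrib, Pi.single_apply]
  refine ⟨0, u, 1, ?_, ?_⟩
  · have := hsum 1
    simp only [Pi.one_apply, one_mul] at this
    simp [quadCon, this]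
  · have hobj : quadObj δ e ζ η 0 u 1 = ∑ m, ζ m * u m + ∑ m, (1/2 + η m) := by
      simp only [quadObj, Pi.zero_apply, Pi.one_apply]
      rw [← Finset.sum_add_distrib]
      simp [add_assoc]
    rw [hobj, hsum]
    linarith

theorem quadValEq_eq_socpValEq (hc₀ : c₀ = -(1/2) * ∑ j, η j ^ 2)
    (hneg : ∃ (x : Fin l → ℝ) (u w : Fin k → ℝ), quadCon α b c x u w < 0)
    (hpos : ∃ (x : Fin l → ℝ) (u w : Fin k → ℝ), 0 < quadCon α b c x u w)
    (hAne : 1 ≤ k ∨ ∃ i, α i ≠ 0) :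
    quadValEq δ e α b ζ η c = socpValEq δ e α b ζ c c₀ := by
  refine le_antisymm ?_ (socpValEq_le_quadValEq hc₀)
  by_cases hδ : ∃ i, α i = 0 ∧ δ i < 0
  · obtain ⟨i, hαi, hδi⟩ := hδ
    rw [quadValEq_eq_bot hc₀ hneg hpos hAne hαi hδi]
    exact bot_le
  · exact quadValEq_le_socpValEq_of_nonneg hc₀ fun i hi => not_lt.1 fun h => hδ ⟨i, hi, h⟩

theorem exists_half_sq_eq_of_socpObj_eq_socpValEq (hc₀ : c₀ = -(1/2) * ∑ j, η j ^ 2)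
    (hneg : ∃ (x : Fin l → ℝ) (u w : Fin k → ℝ), quadCon α b c x u w < 0)
    (hpos : ∃ (x : Fin l → ℝ) (u w : Fin k → ℝ), 0 < quadCon α b c x u w)
    (hAne : 1 ≤ k ∨ ∃ i, α i ≠ 0) {x y : Fin l → ℝ} {z : Fin k → ℝ}
    (hcon : socpConLhs α b x y z + c = 0) (hy : ∀ i, 1/2 * x i ^ 2 ≤ y i)
    (hmin : (socpObj δ e ζ c₀ x y z : EReal) = socpValEq δ e α b ζ c c₀) :
    ∃ (x y : Fin l → ℝ) (z : Fin k → ℝ), socpConLhs α b x y z + c = 0 ∧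
      (∀ i, 1/2 * x i ^ 2 ≤ y i) ∧ (∀ i, 1/2 * x i ^ 2 = y i) ∧
      (socpObj δ e ζ c₀ x y z : EReal) = socpValEq δ e α b ζ c c₀ := by
  have hδ : ∀ i, α i = 0 → 0 ≤ δ i := by
    intro i hαi
    by_contra! hδi
    have hbot := (socpValEq_le_quadValEq hc₀).trans_eq
      (quadValEq_eq_bot (e := e) (ζ := ζ) hc₀ hneg hpos hAne hαi hδi)
    rw [← hmin] at hbot
    exact EReal.coe_ne_bot _ (le_bot_iff.1 hbot)
  obtain ⟨x', hcon', hobj'⟩ := exists_socpConLhs_eq_and_socpObj_le (ζ := ζ) (c₀ := c₀) z hy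
    fun i hi => mul_le_mul_of_nonneg_left (hy i) (hδ i hi)
  have hcon'' : socpConLhs α b x' (fun i => 1/2 * x' i ^ 2) z + c = 0 := by rw [hcon', hcon]
  refine ⟨x', _, z, hcon'', fun i => le_rfl, fun i => rfl, le_antisymm ?_ ?_⟩
  · exact hmin ▸ EReal.coe_le_coe_iff.2 hobj'
  · exact sInf_le ⟨x', _, z, hcon'', fun i => le_rfl, rfl⟩

end Relaxation

theorem stmt_14 (l k : ℕ) (δ e α b : Fin l → ℝ) (ζ η : Fin k → ℝ) (c c₀ : ℝ)
    (hc₀ : c₀ = -(1/2) * ∑ j, η j ^ 2)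
    (hneg : ∃ (x : Fin l → ℝ) (u w : Fin k → ℝ), quadCon α b c x u w < 0)
    (hpos : ∃ (x : Fin l → ℝ) (u w : Fin k → ℝ), 0 < quadCon α b c x u w)
    (hAne : 1 ≤ k ∨ ∃ i, α i ≠ 0) :
    sInf {v : EReal | ∃ (x : Fin l → ℝ) (u w : Fin k → ℝ),
        quadCon α b c x u w = 0 ∧ v = (quadObj δ e ζ η x u w : EReal)} =
      socpValEq δ e α b ζ c c₀ ∧
    ((∃ (x y : Fin l → ℝ) (z : Fin k → ℝ), socpConLhs α b x y z + c = 0 ∧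
        (∀ i, (1/2) * x i ^ 2 ≤ y i) ∧
        (socpObj δ e ζ c₀ x y z : EReal) = socpValEq δ e α b ζ c c₀) →
      ∃ (x y : Fin l → ℝ) (z : Fin k → ℝ), socpConLhs α b x y z + c = 0 ∧
        (∀ i, (1/2) * x i ^ 2 ≤ y i) ∧ (∀ i, (1/2) * x i ^ 2 = y i) ∧
        (socpObj δ e ζ c₀ x y z : EReal) = socpValEq δ e α b ζ c c₀) ∧
    ((∃ i j : Fin k, i ≠ j ∧ ζ i ≠ ζ j) →
      ∀ M : ℝ, ∃ (x : Fin l → ℝ) (u w : Fin k → ℝ),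
        quadCon α b c x u w = 0 ∧ quadObj δ e ζ η x u w < M) :=
  ⟨quadValEq_eq_socpValEq hc₀ hneg hpos hAne,
    fun ⟨_, _, _, hcon, hy, hmin⟩ =>
      exists_half_sq_eq_of_socpObj_eq_socpValEq hc₀ hneg hpos hAne hcon hy hmin,
    fun ⟨_, _, _, hζ⟩ => exists_quadCon_eq_zero_quadObj_lt hζ⟩
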